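/- For every permutation w in S_n, del_S(w) equals the number of left-to-right minima of w other than the first position; i.e. del_S(w) = |{ 1 < i ≤ n : w(i) < w(j) for all j < i }|. -/

import Mathlib

open scoped Classical
open Finset

noncomputable section

/-- `sgen n i` is the adjacent transposition `s_i = (i, i+1)` (1-indexed) in `S_n`,
realized as a permutation of `Fin n` (positions `1,…,n` correspond to `0,…,n-1`). -/
def sgen (n i : ℕ) : Equiv.Perm (Fin n) :=
  if h : 1 ≤ i ∧ i < n then Equiv.swap ⟨i - 1, by omega⟩ ⟨i, h.2⟩ else 1

/-- `agen n i` is the generator `a_i = s_1 s_{i+1}` of the alternating group. -/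
def agen (n i : ℕ) : Equiv.Perm (Fin n) := sgen n 1 * sgen n (i + 1)

/-- The descending product `s_j s_{j-1} ⋯ s_k` (equal to `1` when `k = j+1`). -/
def dProd (n j k : ℕ) : Equiv.Perm (Fin n) :=
  ((List.range (j + 1 - k)).map fun t => sgen n (j - t)).prod

/-- The descending product `a_j a_{j-1} ⋯ a_k` (equal to `1` when `k = j+1`). -/
def aDProd (n j k : ℕ) : Equiv.Perm (Fin n) :=
  ((List.range (j + 1 - k)).map fun t => agen n (j - t)).prod

/-- `R^S_j = {1, s_j, s_j s_{j-1}, …, s_j s_{j-1} ⋯ s_1}`. -/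
def RS (n j : ℕ) : Set (Equiv.Perm (Fin n)) :=
  { w | ∃ k, 1 ≤ k ∧ k ≤ j + 1 ∧ w = dProd n j k }

/-- `R^S_j` as a finite set. -/
def RSfin (n j : ℕ) : Finset (Equiv.Perm (Fin n)) :=
  (Finset.range (j + 1)).image fun k => dProd n j (k + 1)

/-- `R^A_j = {1, a_j, a_j a_{j-1}, …, a_j ⋯ a_2, a_j ⋯ a_2 a_1, a_j ⋯ a_2 a_1⁻¹}`. -/
def RA (n j : ℕ) : Set (Equiv.Perm (Fin n)) :=
  { v | (∃ k, 1 ≤ k ∧ k ≤ j + 1 ∧ v = aDProd n j k) ∨ v = aDProd n j 2 * (agen n 1)⁻¹ }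

/-- The element of `R^A_j` with code `k`:
`k = 0` encodes `a_j ⋯ a_2 a_1⁻¹`, and `k ≥ 1` encodes `a_j ⋯ a_k`. -/
def elemA (n j k : ℕ) : Equiv.Perm (Fin n) :=
  if k = 0 then aDProd n j 2 * (agen n 1)⁻¹ else aDProd n j k

/-- `k : Fin (n-1) → ℕ` codes the S-canonical presentation of `w`:
the `j`-th factor is `s_{j+1} s_j ⋯ s_{k j} ∈ R^S_{j+1}` (`k j = j + 2` codes `1`). -/
def isCanonS (n : ℕ) (w : Equiv.Perm (Fin n)) (k : Fin (n - 1) → ℕ) : Prop :=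
  (∀ j : Fin (n - 1), 1 ≤ k j ∧ k j ≤ (j : ℕ) + 2) ∧
    (List.ofFn fun j : Fin (n - 1) => dProd n ((j : ℕ) + 1) (k j)).prod = w

/-- The code of the S-canonical presentation of `w` (it is unique when it exists). -/
def kvecS (n : ℕ) (w : Equiv.Perm (Fin n)) : Fin (n - 1) → ℕ :=
  if h : ∃ k, isCanonS n w k then h.choose else fun _ => 0

/-- `del_S w` : the number of occurrences of `s_1` in the S-canonical presentation of `w`
(the factor from `R^S_{j+1}` contains `s_1` exactly when its code is `1`). -/
def delS (n : ℕ) (w : Equiv.Perm (Fin n)) : ℕ :=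
  (Finset.univ.filter fun j : Fin (n - 1) => kvecS n w j = 1).card

/-- `k : Fin (m-2) → ℕ` codes the A-canonical presentation of `v ∈ A_m`:
the `j`-th factor is `elemA m (j+1) (k j) ∈ R^A_{j+1}`. -/
def isCanonA (m : ℕ) (v : Equiv.Perm (Fin m)) (k : Fin (m - 2) → ℕ) : Prop :=
  (∀ j : Fin (m - 2), k j ≤ (j : ℕ) + 2) ∧
    (List.ofFn fun j : Fin (m - 2) => elemA m ((j : ℕ) + 1) (k j)).prod = v

/-- The code of the A-canonical presentation of `v`. -/
def kvecA (m : ℕ) (v : Equiv.Perm (Fin m)) : Fin (m - 2) → ℕ :=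
  if h : ∃ k, isCanonA m v k then h.choose else fun _ => 0

/-- `del_A v` : the number of occurrences of `a_1^{±1}` in the A-canonical presentation
(codes `0` and `1` are the two factors containing `a_1^{±1}`). -/
def delA (m : ℕ) (v : Equiv.Perm (Fin m)) : ℕ :=
  (Finset.univ.filter fun j : Fin (m - 2) => kvecA m v j ≤ 1).card

/-- `ℓ_A v` : the total number of letters `a_i^{±1}` in the A-canonical presentation:
the factor of `R^A_{j+1}` with code `0` has `j+1` letters, the one with code `k ≥ 1`
has `j + 2 - k` letters. -/
def lenA (m : ℕ) (v : Equiv.Perm (Fin m)) : ℕ :=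
  ∑ j : Fin (m - 2), if kvecA m v j = 0 then (j : ℕ) + 1 else (j : ℕ) + 2 - kvecA m v j

/-- `ℓ_S w` : the number of inversions of `w`. -/
def invS {n : ℕ} (w : Equiv.Perm (Fin n)) : ℕ :=
  (Finset.univ.filter fun p : Fin n × Fin n => p.1 < p.2 ∧ w p.2 < w p.1).card

/-- The (1-indexed) descent set `Des_S(σ) = {1 ≤ i ≤ n-1 : σ(i) > σ(i+1)}`. -/
def Des1 {n : ℕ} (σ : Equiv.Perm (Fin n)) : Finset ℕ :=
  (Finset.Ico 1 n).filter fun i => ∃ h : i < n, σ ⟨i, h⟩ < σ ⟨i - 1, by omega⟩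

/-- `rmaj_{S_m}(σ) = ∑_{i ∈ Des_S(σ)} (m - i)`. -/
def rmaj1 {n : ℕ} (m : ℕ) (σ : Equiv.Perm (Fin n)) : ℕ := ∑ i ∈ Des1 σ, (m - i)

/-- `maj_S(σ) = ∑_{i ∈ Des_S(σ)} i`. -/
def maj1 {n : ℕ} (σ : Equiv.Perm (Fin n)) : ℕ := ∑ i ∈ Des1 σ, i

/-- `Del_S(σ)` : the (1-indexed) positions `1 < i ≤ n` which are left-to-right minima:
`σ(i) < σ(j)` for all `j < i`. -/
def DelSet {n : ℕ} (σ : Equiv.Perm (Fin n)) : Finset ℕ :=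
  (Finset.Icc 2 n).filter fun i =>
    ∃ h : i - 1 < n, ∀ j : Fin n, (j : ℕ) < i - 1 → σ ⟨i - 1, h⟩ < σ j

/-- `del_S(σ)` computed combinatorially: the number of left-to-right minima of `σ`
other than the first position. -/
def delC {n : ℕ} (σ : Equiv.Perm (Fin n)) : ℕ := (DelSet σ).card

/-- The Gaussian (q-)binomial coefficient, via the q-Pascal recursion. -/
def qbinom {R : Type*} [CommRing R] (q : R) : ℕ → ℕ → R
  | _, 0 => 1
  | 0, _ + 1 => 0
  | n + 1, k + 1 => qbinom q n k + q ^ (k + 1) * qbinom q n (k + 1)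

end

theorem Equiv.Perm.apply_inv_self {α : Type*} (f : Equiv.Perm α) (x : α) : f (f⁻¹ x) = x :=
  f.apply_symm_apply x

theorem Equiv.Perm.inv_apply_self {α : Type*} (f : Equiv.Perm α) (x : α) : f⁻¹ (f x) = x :=
  f.symm_apply_apply x

namespace Stmt6Aux
open Equiv Finset

lemma sgen_apply (n i : ℕ) (h1 : 1 ≤ i) (h2 : i < n) (x : Fin n) :
    ((sgen n i) x : ℕ) = if (x:ℕ) = i-1 then i else if (x:ℕ) = i then i-1 else x := by
  rw [sgen, dif_pos ⟨h1, h2⟩, Equiv.swap_apply_def]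
  simp only [Fin.ext_iff]
  split_ifs <;> simp_all

lemma sgen_oob (n i : ℕ) (h : ¬ (1 ≤ i ∧ i < n)) : sgen n i = 1 := by
  rw [sgen, dif_neg h]

lemma dProd_top (n j : ℕ) : dProd n j (j+1) = 1 := by
  simp [dProd]

lemma dProd_step (n j k : ℕ) (hk : k ≤ j) :
    dProd n j k = dProd n j (k+1) * sgen n k := by
  have h1 : j + 1 - k = (j + 1 - (k+1)) + 1 := by omega
  rw [dProd, dProd, h1, List.range_succ, List.map_append, List.prod_append]
  simp only [List.map_cons, List.map_nil, List.prod_cons, List.prod_nil, mul_one]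
  congr 2
  omega

lemma dProd_apply (n j : ℕ) (hj : j < n) : ∀ d k, 1 ≤ k → k ≤ j + 1 → j + 1 - k = d →
    ∀ x : Fin n, ((dProd n j k) x : ℕ) =
      if (x:ℕ) = k - 1 then j else if k ≤ (x:ℕ) ∧ (x:ℕ) ≤ j then (x:ℕ) - 1 else x := by
  intro d
  induction d with
  | zero =>
    intro k h1 h2 hd x
    have : k = j + 1 := by omega
    subst this
    rw [dProd_top]
    simp only [Equiv.Perm.coe_one, id_eq]
    have := x.isLt
    split_ifs <;> omega
  | succ d ih =>
    intro k h1 h2 hd x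
    have hkj : k ≤ j := by omega
    rw [dProd_step n j k hkj, Equiv.Perm.mul_apply]
    have hs := sgen_apply n k h1 (by omega) x
    have hih := ih (k+1) (by omega) (by omega) (by omega) ((sgen n k) x)
    rw [hih]
    have hx := x.isLt
    have hsx := ((sgen n k) x).isLt
    split_ifs at hs ⊢ <;> omega

end Stmt6Aux
namespace Stmt6Aux
open Equiv Finset

noncomputable def prodStages (n m : ℕ) (k : ℕ → ℕ) : Equiv.Perm (Fin n) :=
  ((List.range m).map fun j => dProd n (j+1) (k j)).prod

lemma prodStages_zero (n : ℕ) (k : ℕ → ℕ) : prodStages n 0 k = 1 := by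
  simp [prodStages]

lemma prodStages_succ (n m : ℕ) (k : ℕ → ℕ) :
    prodStages n (m+1) k = prodStages n m k * dProd n (m+1) (k m) := by
  rw [prodStages, prodStages, List.range_succ, List.map_append, List.prod_append]
  simp

lemma prodStages_congr (n m : ℕ) (k k' : ℕ → ℕ) (h : ∀ j, j < m → k j = k' j) :
    prodStages n m k = prodStages n m k' := by
  unfold prodStages
  congr 1
  apply List.map_congr_left
  intro j hj
  rw [h j (List.mem_range.mp hj)]

lemma prodStages_fix (n : ℕ) : ∀ m, m < n → ∀ (k : ℕ → ℕ),
    (∀ j, j < m → 1 ≤ k j ∧ k j ≤ j + 2) →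
    ∀ x : Fin n, m < (x:ℕ) → prodStages n m k x = x := by
  intro m
  induction m with
  | zero => intro _ k _ x _; rw [prodStages_zero]; rfl
  | succ m ih =>
    intro hm k hb x hx
    rw [prodStages_succ, Equiv.Perm.mul_apply]
    have hb' := hb m (by omega)
    have hd := dProd_apply n (m+1) (by omega) (m + 2 - k m) (k m) hb'.1 (by omega) rfl x
    rw [if_neg (by omega), if_neg (by omega)] at hd
    have : dProd n (m+1) (k m) x = x := Fin.ext hd
    rw [this]
    exact ih (by omega) k (fun j hj => hb j (by omega)) x (by omega)

lemma prodStages_det (n m : ℕ) (k : ℕ → ℕ) (hm : m + 1 < n)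
    (hb : ∀ j, j < m + 1 → 1 ≤ k j ∧ k j ≤ j + 2) :
    prodStages n (m+1) k ⟨k m - 1, by have := (hb m (by omega)).2; omega⟩
      = ⟨m+1, hm⟩ := by
  rw [prodStages_succ, Equiv.Perm.mul_apply]
  have hb' := hb m (by omega)
  have hd := dProd_apply n (m+1) hm (m + 2 - k m) (k m) hb'.1 (by omega) rfl
    ⟨k m - 1, by omega⟩
  rw [if_pos rfl] at hd
  have he : dProd n (m+1) (k m) ⟨k m - 1, by omega⟩ = (⟨m+1, hm⟩ : Fin n) := Fin.ext hd
  rw [he]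
  exact prodStages_fix n m (by omega) k (fun j hj => hb j (by omega)) _ (by simp)

lemma prodStages_unique (n : ℕ) : ∀ m, m ≤ n - 1 → ∀ k k' : ℕ → ℕ,
    (∀ j, j < m → 1 ≤ k j ∧ k j ≤ j + 2) →
    (∀ j, j < m → 1 ≤ k' j ∧ k' j ≤ j + 2) →
    prodStages n m k = prodStages n m k' → ∀ j, j < m → k j = k' j := by
  intro m
  induction m with
  | zero => intro _ _ _ _ _ _ j hj; omega
  | succ m ih =>
    intro hm k k' hb hb' heq
    have hmn : m + 1 < n := by omega
    have h1 := prodStages_det n m k hmn hb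
    have h2 := prodStages_det n m k' hmn hb'
    rw [heq] at h1
    have hkm : k m = k' m := by
      have := Equiv.injective _ (h1.trans h2.symm)
      have hv := congrArg Fin.val this
      simp only at hv
      have := (hb m (by omega)).1
      have := (hb' m (by omega)).1
      omega
    have heq' : prodStages n m k = prodStages n m k' := by
      rw [prodStages_succ, prodStages_succ, hkm] at heq
      exact mul_right_cancel heq
    intro j hj
    rcases Nat.lt_succ_iff_lt_or_eq.mp hj with h | h
    · exact ih (by omega) k k' (fun j hj => hb j (by omega))
        (fun j hj => hb' j (by omega)) heq' j h
    · rw [h]; exact hkm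

end Stmt6Aux
namespace Stmt6Aux
open Equiv Finset

noncomputable def kcodeN (n : ℕ) (w : Equiv.Perm (Fin n)) (j : ℕ) : ℕ :=
  if h : j + 1 < n then
    1 + (Finset.univ.filter fun q : Fin n =>
         (q:ℕ) < ((w⁻¹ ⟨j+1, h⟩ : Fin n) : ℕ) ∧ ((w q : Fin n):ℕ) < j + 1).card
  else j + 2

lemma kcodeN_bounds (n : ℕ) (w : Equiv.Perm (Fin n)) (j : ℕ) :
    1 ≤ kcodeN n w j ∧ kcodeN n w j ≤ j + 2 := by
  unfold kcodeN
  split_ifs with h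
  · refine ⟨by omega, ?_⟩
    have hcard : (Finset.univ.filter fun q : Fin n =>
        (q:ℕ) < ((w⁻¹ ⟨j+1, h⟩ : Fin n) : ℕ) ∧ ((w q : Fin n):ℕ) < j + 1).card
        ≤ (Finset.Iio (⟨j+1, h⟩ : Fin n)).card := by
      apply Finset.card_le_card_of_injOn (fun q => w q)
      · intro q hq
        simp only [Finset.mem_coe, Finset.mem_filter] at hq
        simp only [Finset.mem_coe, Finset.mem_Iio, Fin.lt_def]
        exact hq.2.2
      · intro a _ b _ hab
        exact w.injective hab
    rw [Fin.card_Iio] at hcard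
    simp only at hcard
    omega
  · omega

lemma card_lt_val (n : ℕ) (p : Fin n) :
    (Finset.univ.filter fun q : Fin n => (q:ℕ) < (p:ℕ)).card = (p:ℕ) := by
  have : (Finset.univ.filter fun q : Fin n => (q:ℕ) < (p:ℕ)) = Finset.Iio p := by
    ext q
    simp only [Finset.mem_filter, Finset.mem_Iio, Fin.lt_def, Finset.mem_univ, true_and]
  rw [this, Fin.card_Iio]

lemma fix_high_of_ge (n m : ℕ) (w : Equiv.Perm (Fin n))
    (hw : ∀ x : Fin n, m ≤ (x:ℕ) → w x = x) (y : Fin n) (hy : m ≤ ((w y : Fin n):ℕ)) :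
    m ≤ (y:ℕ) ∨ (w y : Fin n) = y := by
  by_cases hc : m ≤ (y:ℕ)
  · exact Or.inl hc
  · right
    exfalso
    have h1 := hw (w y) hy
    have h2 : ((w y : Fin n):ℕ) = (y:ℕ) := congrArg Fin.val (w.injective h1)
    omega

end Stmt6Aux
namespace Stmt6Aux
open Equiv Finset

lemma exists_canon (n : ℕ) : ∀ m, m ≤ n - 1 → ∀ w : Equiv.Perm (Fin n),
    (∀ x : Fin n, m + 1 ≤ (x:ℕ) → w x = x) →
    prodStages n m (kcodeN n w) = w := by
  intro m
  induction m with
  | zero =>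
    intro _ w hw
    rw [prodStages_zero]
    symm
    ext x
    rcases Nat.eq_zero_or_pos (x:ℕ) with hx | hx
    · by_contra hne
      have hge : 1 ≤ ((w x : Fin n):ℕ) := by
        rcases Nat.eq_zero_or_pos ((w x : Fin n):ℕ) with h0 | h0
        · exfalso; apply hne
          have : (w x : Fin n) = x := Fin.ext (by omega)
          exact congrArg Fin.val this
        · exact h0
      have h1 := hw (w x) hge
      have h2 : ((w x : Fin n):ℕ) = (x:ℕ) := congrArg Fin.val (w.injective h1)
      exact hne h2
    · exact congrArg Fin.val (hw x hx)
  | succ m ih =>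
    intro hm w hw
    have hs : m + 1 < n := by omega
    set sF : Fin n := ⟨m+1, hs⟩ with hsF
    have hsFval : (sF : ℕ) = m + 1 := rfl
    set p : Fin n := w⁻¹ sF with hp
    have hwp : w p = sF := Equiv.Perm.apply_inv_self w sF
    have hple : (p:ℕ) ≤ m+1 := by
      by_contra hc
      have h1 := hw p (by omega)
      rw [hwp] at h1
      have := congrArg Fin.val h1
      simp only [hsF] at this
      omega
    set c : ℕ := (p:ℕ) + 1 with hc
    set u := dProd n (m+1) c with hudef
    have hu : ∀ x : Fin n, ((u x):ℕ) =
        if (x:ℕ) = (p:ℕ) then m+1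
        else if (p:ℕ)+1 ≤ (x:ℕ) ∧ (x:ℕ) ≤ m+1 then (x:ℕ) - 1 else (x:ℕ) := by
      intro x
      have := dProd_apply n (m+1) hs (m + 2 - c) c (by omega) (by omega) (by omega) x
      rw [hudef, this, hc, Nat.add_sub_cancel]
    set w' := w * u⁻¹ with hw'def
    have hw'app : ∀ x, w' x = w (u⁻¹ x) := fun x => rfl
    have hup : u p = sF := by
      have := hu p
      rw [if_pos rfl] at this
      exact Fin.ext this
    have hw'fix : ∀ x : Fin n, m + 1 ≤ (x:ℕ) → w' x = x := by
      intro x hx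
      rcases eq_or_lt_of_le hx with hx1 | hx1
      · have hxs : x = sF := Fin.ext (by omega)
        subst hxs
        have : u⁻¹ sF = p := by
          rw [← hup]; exact Equiv.Perm.inv_apply_self u p
        rw [hw'app, this, hwp]
      · have hux : u x = x := by
          have h9 := hu x
          have h7 : ¬((x:ℕ) = (p:ℕ)) := by omega
          have h8 : ¬((p:ℕ)+1 ≤ (x:ℕ) ∧ (x:ℕ) ≤ m+1) := by omega
          rw [if_neg h7, if_neg h8] at h9
          exact Fin.ext h9
        have : u⁻¹ x = x := by
          conv_lhs => rw [← hux]
          exact Equiv.Perm.inv_apply_self u x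
        rw [hw'app, this]
        exact hw x (by omega)
    have hkm : kcodeN n w m = c := by
      unfold kcodeN
      rw [dif_pos hs]
      have hfe : (Finset.univ.filter fun q : Fin n =>
          (q:ℕ) < ((w⁻¹ ⟨m+1, hs⟩ : Fin n) : ℕ) ∧ ((w q : Fin n):ℕ) < m + 1)
          = Finset.univ.filter fun q : Fin n => (q:ℕ) < (p:ℕ) := by
        ext q
        simp only [Finset.mem_filter, Finset.mem_univ, true_and]
        constructor
        · exact fun h => h.1
        · intro hq
          refine ⟨hq, ?_⟩
          have hqp : q ≠ p := by intro h; rw [h] at hq; omega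
          have h1 : (w q : Fin n) ≠ sF := by
            intro h
            apply hqp
            rw [← hwp] at h
            exact w.injective h
          have h2 : ¬ (m + 2 ≤ ((w q : Fin n):ℕ)) := by
            intro h
            have h3 := hw (w q) (by omega)
            have h4 : ((w q : Fin n):ℕ) = (q:ℕ) := congrArg Fin.val (w.injective h3)
            omega
          have h5 : ((w q : Fin n):ℕ) ≠ m + 1 := by
            intro h
            exact h1 (Fin.ext h)
          omega
      rw [hfe, card_lt_val]
      omega
    have hmono : ∀ a b : Fin n, (a:ℕ) ≤ m+1 → (b:ℕ) ≤ m+1 → a ≠ p → b ≠ p →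
        (((u a):ℕ) < ((u b):ℕ) ↔ (a:ℕ) < (b:ℕ)) := by
      intro a b ha hb hap hbp
      have hav : (a:ℕ) ≠ (p:ℕ) := fun h => hap (Fin.ext h)
      have hbv : (b:ℕ) ≠ (p:ℕ) := fun h => hbp (Fin.ext h)
      have h1 := hu a
      have h2 := hu b
      rw [if_neg hav] at h1
      rw [if_neg hbv] at h2
      split_ifs at h1 h2 <;> omega
    have hagree : ∀ j, j < m → kcodeN n w' j = kcodeN n w j := by
      intro j hj
      have ht : j + 1 < n := by omega
      unfold kcodeN
      rw [dif_pos ht, dif_pos ht]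
      congr 1
      set tF : Fin n := ⟨j+1, ht⟩ with htF
      have htFval : (tF : ℕ) = j + 1 := rfl
      set r : Fin n := w⁻¹ tF with hr
      have hwr : w r = tF := Equiv.Perm.apply_inv_self w tF
      -- any position with w-value < j+1 is ≤ m+1 and ≠ p
      have hsmall : ∀ q : Fin n, ((w q : Fin n):ℕ) < j + 1 → (q:ℕ) ≤ m + 1 ∧ q ≠ p := by
        intro q hq
        constructor
        · by_contra hcq
          have h1 := hw q (by omega)
          have h2 := congrArg Fin.val h1
          omega
        · intro h
          rw [h, hwp] at hq
          simp only [hsF] at hq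
          omega
      have hrle : (r:ℕ) ≤ m + 1 ∧ r ≠ p := by
        constructor
        · by_contra hcq
          have h1 := hw r (by omega)
          rw [hwr] at h1
          have h2 := congrArg Fin.val h1
          simp only [htF] at h2
          omega
        · intro h
          rw [h, hwp] at hwr
          have := congrArg Fin.val hwr
          simp only [hsF, htF] at this
          omega
      have hw'r : w'⁻¹ tF = u r := by
        have : w' (u r) = tF := by
          rw [hw'app, Equiv.Perm.inv_apply_self u, hwr]
        rw [← this, Equiv.Perm.inv_apply_self]
      rw [hw'r]
      refine (Finset.card_bij (fun q _ => u q) ?_ ?_ ?_).symm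
      · intro q hq
        simp only [Finset.mem_filter, Finset.mem_univ, true_and] at hq ⊢
        obtain ⟨hq1, hq2⟩ := hq
        have hqs := hsmall q hq2
        constructor
        · exact (hmono q r hqs.1 hrle.1 hqs.2 hrle.2).mpr hq1
        · rw [hw'app, Equiv.Perm.inv_apply_self u]
          exact hq2
      · intro a _ b _ hab
        exact u.injective hab
      · intro q' hq'
        simp only [Finset.mem_filter, Finset.mem_univ, true_and] at hq'
        obtain ⟨hq1, hq2⟩ := hq'
        refine ⟨u⁻¹ q', ?_, Equiv.Perm.apply_inv_self u q'⟩
        simp only [Finset.mem_filter, Finset.mem_univ, true_and]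
        have hv : ((w (u⁻¹ q') : Fin n):ℕ) < j + 1 := by
          rw [← hw'app]; exact hq2
        have hqs := hsmall (u⁻¹ q') hv
        refine ⟨?_, hv⟩
        have := (hmono (u⁻¹ q') r hqs.1 hrle.1 hqs.2 hrle.2).mp
        apply this
        rw [Equiv.Perm.apply_inv_self u]
        exact hq1
    calc prodStages n (m+1) (kcodeN n w)
        = prodStages n m (kcodeN n w) * dProd n (m+1) (kcodeN n w m) := prodStages_succ n m _
      _ = prodStages n m (kcodeN n w') * u := by
          rw [hkm, ← hudef]
          congr 1
          exact prodStages_congr n m _ _ (fun j hj => (hagree j hj).symm)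
      _ = w' * u := by rw [ih (by omega) w' hw'fix]
      _ = w := by rw [hw'def]; exact inv_mul_cancel_right w u

end Stmt6Aux
namespace Stmt6Aux
open Equiv Finset

lemma ofFn_prod_eq (n m : ℕ) (g : ℕ → Equiv.Perm (Fin n)) :
    (List.ofFn fun j : Fin m => g (j:ℕ)).prod = ((List.range m).map g).prod := by
  rw [List.ofFn_eq_map, ← List.map_coe_finRange_eq_range, List.map_map]
  rfl

/-- extend a code on `Fin (n-1)` to `ℕ`. -/
noncomputable def extCode (n : ℕ) (k : Fin (n-1) → ℕ) : ℕ → ℕ :=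
  fun j => if h : j < n - 1 then k ⟨j, h⟩ else 0

lemma isCanonS_prodStages (n : ℕ) (w : Equiv.Perm (Fin n)) (k : Fin (n-1) → ℕ)
    (hc : isCanonS n w k) : prodStages n (n-1) (extCode n k) = w := by
  rw [← hc.2, prodStages,
    ← ofFn_prod_eq n (n-1) (fun j => dProd n (j+1) (extCode n k j))]
  refine congrArg List.prod (congrArg List.ofFn (funext fun j => ?_))
  simp only [extCode, dif_pos j.isLt, Fin.eta]

lemma canon_eq_kcodeN (n : ℕ) (w : Equiv.Perm (Fin n)) (k : Fin (n-1) → ℕ)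
    (hc : isCanonS n w k) : ∀ j : Fin (n-1), k j = kcodeN n w (j:ℕ) := by
  intro j
  have h1 : prodStages n (n-1) (extCode n k) = w := isCanonS_prodStages n w k hc
  have h2 : prodStages n (n-1) (kcodeN n w) = w := by
    apply exists_canon n (n-1) le_rfl w
    intro x hx
    exact absurd x.isLt (by omega)
  have h3 := prodStages_unique n (n-1) le_rfl (extCode n k) (kcodeN n w)
    (fun j hj => by
      have := hc.1 ⟨j, hj⟩
      simp only [extCode, dif_pos hj]
      exact this)
    (fun j hj => kcodeN_bounds n w j)
    (h1.trans h2.symm) (j:ℕ) j.isLt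
  rw [← h3]
  simp only [extCode, dif_pos j.isLt]

lemma kcodeFin_isCanon (n : ℕ) (w : Equiv.Perm (Fin n)) :
    isCanonS n w (fun j : Fin (n-1) => kcodeN n w (j:ℕ)) := by
  constructor
  · exact fun j => kcodeN_bounds n w (j:ℕ)
  · have h2 : prodStages n (n-1) (kcodeN n w) = w := by
      apply exists_canon n (n-1) le_rfl w
      intro x hx
      exact absurd x.isLt (by omega)
    exact (ofFn_prod_eq n (n-1) (fun j => dProd n (j+1) (kcodeN n w j))).trans
      (by rw [← prodStages]; exact h2)

lemma kvecS_eq (n : ℕ) (w : Equiv.Perm (Fin n)) (j : Fin (n-1)) :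
    kvecS n w j = kcodeN n w (j:ℕ) := by
  have hex : ∃ k, isCanonS n w k := ⟨_, kcodeFin_isCanon n w⟩
  rw [kvecS, dif_pos hex]
  exact canon_eq_kcodeN n w _ hex.choose_spec j

end Stmt6Aux
namespace Stmt6Aux
open Equiv Finset

noncomputable def Lmin {n : ℕ} (w : Equiv.Perm (Fin n)) : Finset (Fin n) :=
  Finset.univ.filter fun p => ∀ q : Fin n, (q:ℕ) < (p:ℕ) → ((w p : Fin n):ℕ) < ((w q : Fin n):ℕ)

lemma zero_mem_Lmin {n : ℕ} (hn : 0 < n) (w : Equiv.Perm (Fin n)) :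
    (⟨0, hn⟩ : Fin n) ∈ Lmin w := by
  simp only [Lmin, Finset.mem_filter, Finset.mem_univ, true_and]
  intro q hq
  omega

lemma inv_zero_mem_Lmin {n : ℕ} (hn : 0 < n) (w : Equiv.Perm (Fin n)) :
    w⁻¹ ⟨0, hn⟩ ∈ Lmin w := by
  simp only [Lmin, Finset.mem_filter, Finset.mem_univ, true_and]
  intro q hq
  rw [Equiv.Perm.apply_inv_self]
  have hne : w q ≠ ⟨0, hn⟩ := by
    intro h
    have : q = w⁻¹ ⟨0, hn⟩ := by rw [← h, Equiv.Perm.inv_apply_self]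
    rw [this] at hq
    omega
  have : ((w q : Fin n):ℕ) ≠ 0 := fun h => hne (Fin.ext h)
  simp only
  omega

lemma kcode_one_iff (n : ℕ) (w : Equiv.Perm (Fin n)) (j : ℕ) (hj : j + 1 < n) :
    kcodeN n w j = 1 ↔ (w⁻¹ ⟨j+1, hj⟩) ∈ Lmin w := by
  rw [kcodeN, dif_pos hj]
  simp only [Lmin, Finset.mem_filter, Finset.mem_univ, true_and]
  rw [Nat.add_eq_left, Finset.card_eq_zero, Finset.filter_eq_empty_iff]
  constructor
  · intro h q hq
    have h2 := h (Finset.mem_univ q)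
    rw [Equiv.Perm.apply_inv_self]
    simp only [not_and, not_lt] at h2
    have h3 := h2 hq
    have hne : w q ≠ ⟨j+1, hj⟩ := by
      intro he
      have : q = w⁻¹ ⟨j+1, hj⟩ := by rw [← he, Equiv.Perm.inv_apply_self]
      rw [this] at hq
      omega
    have : ((w q : Fin n):ℕ) ≠ j + 1 := fun h => hne (Fin.ext h)
    simp only
    omega
  · intro h q _
    simp only [not_and, not_lt]
    intro hq
    have h2 := h q hq
    rw [Equiv.Perm.apply_inv_self] at h2
    simp only at h2
    omega

lemma count_values (n : ℕ) (hn : 0 < n) (w : Equiv.Perm (Fin n)) :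
    (Finset.univ.filter fun j : Fin (n-1) =>
      w⁻¹ ⟨(j:ℕ)+1, by omega⟩ ∈ Lmin w).card = ((Lmin w).erase (w⁻¹ ⟨0, hn⟩)).card := by
  refine Finset.card_bij (fun j _ => w⁻¹ ⟨(j:ℕ)+1, by omega⟩) ?_ ?_ ?_
  · intro j hj
    simp only [Finset.mem_filter, Finset.mem_univ, true_and] at hj
    rw [Finset.mem_erase]
    refine ⟨?_, hj⟩
    intro h
    have := congrArg w h
    rw [Equiv.Perm.apply_inv_self, Equiv.Perm.apply_inv_self] at this
    have := congrArg Fin.val this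
    simp only at this
    omega
  · intro a _ b _ hab
    have := congrArg w hab
    rw [Equiv.Perm.apply_inv_self, Equiv.Perm.apply_inv_self] at this
    have := congrArg Fin.val this
    simp only at this
    exact Fin.ext (by omega)
  · intro p hp
    rw [Finset.mem_erase] at hp
    have hne : ((w p : Fin n):ℕ) ≠ 0 := by
      intro h
      apply hp.1
      have : w p = ⟨0, hn⟩ := Fin.ext h
      rw [← this, Equiv.Perm.inv_apply_self]
    have hlt : ((w p : Fin n):ℕ) < n := (w p).isLt
    have hX : (⟨((⟨((w p : Fin n):ℕ) - 1, by omega⟩ : Fin (n-1)) : ℕ) + 1, by omega⟩ : Fin n)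
        = w p :=
      Fin.ext (show ((w p : Fin n):ℕ) - 1 + 1 = ((w p : Fin n):ℕ) by omega)
    refine ⟨⟨((w p : Fin n):ℕ) - 1, by omega⟩, ?_, ?_⟩
    · simp only [Finset.mem_filter, Finset.mem_univ, true_and]
      rw [hX, Equiv.Perm.inv_apply_self]
      exact hp.2
    · simp only [Equiv.Perm.inv_eq_iff_eq]
      exact hX

lemma count_positions (n : ℕ) (hn : 0 < n) (w : Equiv.Perm (Fin n)) :
    (DelSet w).card = ((Lmin w).erase ⟨0, hn⟩).card := by
  apply Finset.card_bij (fun i hi => (⟨i - 1, by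
    rw [DelSet, Finset.mem_filter, Finset.mem_Icc] at hi; omega⟩ : Fin n))
  · intro i hi
    rw [DelSet, Finset.mem_filter, Finset.mem_Icc] at hi
    obtain ⟨⟨hi2, hin⟩, h, hcond⟩ := hi
    rw [Finset.mem_erase]
    constructor
    · intro hcontra
      have := congrArg Fin.val hcontra
      simp only at this
      omega
    · simp only [Lmin, Finset.mem_filter, Finset.mem_univ, true_and]
      intro q hq
      have := hcond q (by simpa using hq)
      exact this
  · intro a ha b hb hab
    rw [DelSet, Finset.mem_filter, Finset.mem_Icc] at ha hb
    have := congrArg Fin.val hab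
    simp only at this
    omega
  · intro p hp
    rw [Finset.mem_erase] at hp
    have hp0 : (p:ℕ) ≠ 0 := fun h => hp.1 (Fin.ext h)
    refine ⟨(p:ℕ) + 1, ?_, Fin.ext (by simp)⟩
    rw [DelSet, Finset.mem_filter, Finset.mem_Icc]
    refine ⟨⟨by omega, by have := p.isLt; omega⟩, by simp, ?_⟩
    intro q hq
    have hL := hp.2
    simp only [Lmin, Finset.mem_filter, Finset.mem_univ, true_and] at hL
    have h2 := hL q (by simpa using hq)
    have hpe : (⟨(p:ℕ) + 1 - 1, by simp⟩ : Fin n) = p := Fin.ext (by simp)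
    rw [Fin.lt_def]
    simp only [hpe]
    exact h2

end Stmt6Aux

/-- `del_S(w)` equals the number of left-to-right minima of `w` other than position 1. -/
theorem stmt6 (n : ℕ) (w : Equiv.Perm (Fin n)) : delS n w = (DelSet w).card := by
  rcases Nat.eq_zero_or_pos n with hn | hn
  · subst hn
    have h1 : delS 0 w = 0 := by
      rw [delS]
      apply Finset.card_eq_zero.mpr
      apply Finset.eq_empty_of_forall_notMem
      intro j
      exact absurd j.2 (by omega)
    have h2 : DelSet w = ∅ := by
      apply Finset.eq_empty_of_forall_notMem
      intro i hi
      rw [DelSet, Finset.mem_filter, Finset.mem_Icc] at hi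
      omega
    rw [h1, h2, Finset.card_empty]
  · rw [delS]
    have hfe : (Finset.univ.filter fun j : Fin (n-1) => kvecS n w j = 1)
        = (Finset.univ.filter fun j : Fin (n-1) =>
            w⁻¹ ⟨(j:ℕ)+1, by omega⟩ ∈ Stmt6Aux.Lmin w) := by
      apply Finset.filter_congr
      intro j _
      rw [Stmt6Aux.kvecS_eq n w j]
      exact Stmt6Aux.kcode_one_iff n w (j:ℕ) (by omega)
    rw [hfe, Stmt6Aux.count_values n hn w, Stmt6Aux.count_positions n hn w,
      Finset.card_erase_of_mem (Stmt6Aux.inv_zero_mem_Lmin hn w),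
      Finset.card_erase_of_mem (Stmt6Aux.zero_mem_Lmin hn w)]
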